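/- arXiv:2412.13485 — 2 statements merged into one kernel-verified Lean document; each statement's English description precedes it below -/
import Mathlib

section
/- Let G be a K4-free simple graph on n vertices and I an independent set of G with |I| > n/3. Then e(G) ≤ (1/4)·(n − |I|)·(n + 3|I|). -/
/-!
Let `Z` be a largest triangle-free subset of `V \ I`. Since `G` is `K₄`-free, the neighbourhood of
any vertex is triangle-free, so every vertex has at most `|Z|` neighbours outside `I`. Every edge
not inside `Z` joins a vertex outside `Z` to a vertex outside `I`, and Mantel's theorem bounds
the edges inside `Z`, whence `e(G) ≤ |Z|²/4 + (n - |Z|)|Z| = |Z|(4n - 3|Z|)/4`. This is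
increasing in `|Z|` up to `2n/3`, and `|Z| ≤ n - |I| < 2n/3`.
-/

open Finset

theorem monotoneOn_mul_four_mul_sub_three_mul (n : ℝ) :
    MonotoneOn (fun x : ℝ => x * (4 * n - 3 * x)) (Set.Iic (2 * n / 3)) := by
  intro z _ w hw hzw
  simp only [Set.mem_Iic] at hw
  nlinarith

namespace SimpleGraph

variable {V : Type*} {G : SimpleGraph V}

theorem CliqueFree.cliqueFreeOn_neighborSet {n : ℕ} (hG : G.CliqueFree (n + 1)) (v : V) :
    G.CliqueFreeOn (G.neighborSet v) n := by
  simpa using (hG.cliqueFreeOn (s := Set.univ)).of_succ G (Set.mem_univ v)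

theorem exists_max_card_cliqueFreeOn_subset (s : Finset V) {n : ℕ} (hn : n ≠ 0) :
    ∃ Z ⊆ s, G.CliqueFreeOn Z n ∧ ∀ T ⊆ s, G.CliqueFreeOn T n → #T ≤ #Z := by
  classical
  obtain ⟨Z, hZ, hmax⟩ :=
    (s.powerset.filter fun T : Finset V => G.CliqueFreeOn T n).exists_max_image card
      ⟨∅, by simp [cliqueFreeOn_empty, hn]⟩
  rw [mem_filter, mem_powerset] at hZ
  exact ⟨Z, hZ.1, hZ.2, fun T hTs hT => hmax T (mem_filter.2 ⟨mem_powerset.2 hTs, hT⟩)⟩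

variable [Fintype V] [DecidableRel G.Adj]

theorem CliqueFree.four_mul_card_edgeFinset_le_sq (hG : G.CliqueFree 3) :
    4 * #G.edgeFinset ≤ Fintype.card V ^ 2 := by
  have h := CliqueFree.card_edgeFinset_le (r := 2) hG
  have hmod : (Fintype.card V % 2).choose 2 = 0 :=
    Nat.choose_eq_zero_of_lt (Nat.mod_lt _ two_pos)
  simp only [hmod, add_zero] at h
  omega

variable [DecidableEq V]

theorem CliqueFreeOn.four_mul_card_edgeFinset_inter_sym2_le {s : Finset V}
    (hs : G.CliqueFreeOn s 3) : 4 * #(G.edgeFinset ∩ s.sym2) ≤ #s ^ 2 := by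
  rw [← filter_edgeFinset_toFinset_subset, card_filter_edgeFinset_toFinset_subset]
  simpa using ((G.cliqueFree_induce_iff _ _).2 hs).four_mul_card_edgeFinset_le_sq

theorem card_edgeFinset_sdiff_sym2_le_sum {Z I : Finset V} (hI : G.IsIndepSet I)
    (hZI : Disjoint Z I) :
    #(G.edgeFinset \ Z.sym2) ≤ ∑ v ∈ Zᶜ, #(G.neighborFinset v \ I) := by
  have hcover : G.edgeFinset \ Z.sym2 ⊆
      Zᶜ.biUnion fun v => (G.neighborFinset v \ I).image (s(v, ·)) := by
    intro e he
    induction e using Sym2.ind with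
    | h a b =>
    simp only [mem_sdiff, mem_edgeFinset, mem_edgeSet, mk_mem_sym2_iff, not_and_or] at he
    obtain ⟨hab, hout⟩ := he
    have hcharge : (a ∉ Z ∧ b ∉ I) ∨ (b ∉ Z ∧ a ∉ I) := by
      by_cases hb : b ∈ I
      · exact Or.inr ⟨Finset.disjoint_right.1 hZI hb, fun ha => hI ha hb hab.ne hab⟩
      by_cases ha : a ∈ Z
      · exact Or.inr ⟨hout.resolve_left (not_not.2 ha), Finset.disjoint_left.1 hZI ha⟩
      · exact Or.inl ⟨ha, hb⟩
    simp only [mem_biUnion, mem_compl, mem_image, mem_sdiff, mem_neighborFinset]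
    rcases hcharge with ⟨ha, hb⟩ | ⟨hb, ha⟩
    · exact ⟨a, ha, b, ⟨hab, hb⟩, rfl⟩
    · exact ⟨b, hb, a, ⟨hab.symm, ha⟩, Sym2.eq_swap⟩
  calc #(G.edgeFinset \ Z.sym2)
      ≤ #(Zᶜ.biUnion fun v => (G.neighborFinset v \ I).image (s(v, ·))) := card_le_card hcover
    _ ≤ ∑ v ∈ Zᶜ, #((G.neighborFinset v \ I).image (s(v, ·))) := card_biUnion_le
    _ ≤ ∑ v ∈ Zᶜ, #(G.neighborFinset v \ I) := sum_le_sum fun v _ => card_image_le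

theorem CliqueFree.exists_four_mul_card_edgeFinset_le (hG : G.CliqueFree 4) {I : Finset V}
    (hI : G.IsIndepSet I) :
    ∃ z : ℕ, z + #I ≤ Fintype.card V ∧
      4 * (#G.edgeFinset : ℝ) ≤ z * (4 * Fintype.card V - 3 * z) := by
  set n := Fintype.card V
  obtain ⟨Z, hZI, hZ, hZmax⟩ := G.exists_max_card_cliqueFreeOn_subset Iᶜ three_ne_zero
  have hdeg (v : V) : #(G.neighborFinset v \ I) ≤ #Z :=
    hZmax _ (fun w hw => mem_compl.2 (mem_sdiff.1 hw).2)
      (.subset G (fun w hw => (G.mem_neighborFinset v w).1 (mem_sdiff.1 hw).1)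
        (hG.cliqueFreeOn_neighborSet v))
  have hout : #(G.edgeFinset \ Z.sym2) ≤ (n - #Z) * #Z := by
    refine (G.card_edgeFinset_sdiff_sym2_le_sum hI
      (subset_compl_iff_disjoint_right.1 hZI)).trans ?_
    simpa [card_compl] using sum_le_card_nsmul Zᶜ _ _ fun v _ => hdeg v
  have hin := hZ.four_mul_card_edgeFinset_inter_sym2_le
  have hsplit := card_inter_add_card_sdiff G.edgeFinset Z.sym2
  have hZn : #Z + #I ≤ n :=
    Nat.add_le_of_le_sub (card_le_univ I) (by simpa [card_compl] using card_le_card hZI)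
  refine ⟨#Z, hZn, ?_⟩
  have hedges : 4 * #G.edgeFinset ≤ #Z ^ 2 + 4 * ((n - #Z) * #Z) := by omega
  have := (Nat.cast_le (α := ℝ)).2 hedges
  push_cast [Nat.cast_sub (show #Z ≤ n by omega)] at this
  linarith

end SimpleGraph

open scoped Classical

theorem stmt_7 {V : Type*} [Fintype V] (G : SimpleGraph V)
    (hG : G.CliqueFree 4) (I : Finset V)
    (hI : ∀ v ∈ I, ∀ w ∈ I, ¬G.Adj v w)
    (hIbig : (I.card : ℝ) > Fintype.card V / 3) :
    (G.edgeFinset.card : ℝ) ≤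
      1 / 4 * (Fintype.card V - I.card) * (Fintype.card V + 3 * I.card) := by
  obtain ⟨z, hzI, hedges⟩ :=
    hG.exists_four_mul_card_edgeFinset_le (I := I) fun v hv w hw _ => hI v hv w hw
  have hz : (z : ℝ) ≤ Fintype.card V - I.card := by
    rw [le_sub_iff_add_le]; exact_mod_cast hzI
  have hmono := monotoneOn_mul_four_mul_sub_three_mul (Fintype.card V : ℝ)
    (by simp only [Set.mem_Iic]; linarith) (by simp only [Set.mem_Iic]; linarith) hz
  simp only at hmono
  linarith
end

section
/- Let m0 > 0 and ε > 0, and let G be a graph on an even number n of vertices with n > 1/ε and e(G) ≤ (4m0 − ε)n². Then there exists a balanced bipartition V(G) = A ∪ A^c with |A| = |A^c| such that max{e(A), e(A^c)} < m0·n². -/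
/-!
Sort the vertices by degree and pair them off consecutively. Picking one vertex from each pair
independently and uniformly gives a balanced set `A`; an edge inside a pair never has both ends on
the same side and any other edge does with probability `1/2`, so some choice has
`e(A) + e(Aᶜ) ≤ m/2`. For every choice, `2 e(A) - 2 e(Aᶜ) = ∑_{A} deg - ∑_{Aᶜ} deg` is a signed
sum of the degree gaps inside the pairs, and these gaps telescope to at most `Δ - δ < n`. Hence
`4 max(e(A), e(Aᶜ)) ≤ m + Δ - δ < m + ε n² ≤ 4 m₀ n²`.
-/

open scoped Classical

/-- The number of edges of `G` with both endpoints in `A`. -/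
noncomputable def edgesIn {V : Type*} [Fintype V] (G : SimpleGraph V) (A : Finset V) : ℕ :=
  (G.edgeFinset.filter fun e => ∀ v ∈ e, v ∈ A).card

open Finset

lemma two_mul_card_filter_le_of_involutive {α : Type*} [Fintype α] {P : α → Prop}
    [DecidablePred P] {σ : α → α} (hσ : Function.Involutive σ) (hP : ∀ a, P a → ¬ P (σ a)) :
    2 * #{a | P a} ≤ Fintype.card α := by
  have hle : #{a | P a} ≤ #{a | ¬ P a} :=
    card_le_card_of_injOn σ (fun a ha => mem_filter.2 ⟨mem_univ _, hP a (mem_filter.1 ha).2⟩)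
      hσ.injective.injOn
  have := card_filter_add_card_filter_not (s := univ) (fun a => P a)
  rw [card_univ] at this
  omega

lemma sum_range_sub_le_of_monotone {d : ℕ → ℤ} (hd : Monotone d) (p : ℕ) :
    ∑ i ∈ range p, (d (2 * i + 1) - d (2 * i)) ≤ d (2 * p) - d 0 := by
  calc ∑ i ∈ range p, (d (2 * i + 1) - d (2 * i))
      ≤ ∑ i ∈ range p, (d (2 * (i + 1)) - d (2 * i)) :=
        sum_le_sum fun i _ => sub_le_sub_right (hd (by omega)) _
    _ = d (2 * p) - d 0 := sum_range_sub (fun i => d (2 * i)) p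

lemma exists_equiv_fin_monotone {V α : Type*} [Fintype V] [LinearOrder α] {n : ℕ}
    (hV : Fintype.card V = n) (w : V → α) : ∃ v : Fin n ≃ V, Monotone (w ∘ v) := by
  subst hV
  let g := w ∘ (Fintype.equivFin V).symm
  exact ⟨(Tuple.sort g).trans (Fintype.equivFin V).symm, Tuple.monotone_sort g⟩

def finPairEquiv (p : ℕ) : Fin p × Bool ≃ Fin (2 * p) :=
  ((Equiv.refl _).prodCongr finTwoEquiv.symm).trans
    (finProdFinEquiv.trans (finCongr (mul_comm p 2)))

@[simp] lemma finPairEquiv_apply_val (p : ℕ) (i : Fin p) (b : Bool) :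
    (finPairEquiv p (i, b) : ℕ) = 2 * i + b.toNat := by
  cases b <;> simp [finPairEquiv, finProdFinEquiv, finTwoEquiv, add_comm]

lemma exists_pairing_sum_abs_sub_le {V : Type*} [Fintype V] [Nonempty V] {p : ℕ}
    (hV : Fintype.card V = 2 * p) (w : V → ℤ) {c : ℤ} (hw : ∀ u v, w u - w v ≤ c) :
    ∃ e : Fin p × Bool ≃ V, ∑ i, |w (e (i, true)) - w (e (i, false))| ≤ c := by
  obtain ⟨v, hv⟩ := exists_equiv_fin_monotone hV w
  have hp : 0 < 2 * p := hV ▸ Fintype.card_pos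
  -- the sorted weights, extended constantly past the last vertex to a monotone sequence on `ℕ`
  let d : ℕ → ℤ := fun k => w (v ⟨min k (2 * p - 1), by omega⟩)
  have hd : Monotone d := fun k l hkl => hv (Fin.mk_le_mk.2 (by omega))
  have hterm : ∀ i : Fin p, |w (v (finPairEquiv p (i, true))) - w (v (finPairEquiv p (i, false)))|
      = d (2 * i + 1) - d (2 * i) := by
    intro i
    have htrue : finPairEquiv p (i, true) = ⟨min (2 * i + 1) (2 * p - 1), by omega⟩ :=
      Fin.ext (by simp only [finPairEquiv_apply_val, Bool.toNat_true]; omega)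
    have hfalse : finPairEquiv p (i, false) = ⟨min (2 * i) (2 * p - 1), by omega⟩ :=
      Fin.ext (by simp only [finPairEquiv_apply_val, Bool.toNat_false]; omega)
    rw [htrue, hfalse, abs_of_nonneg (sub_nonneg.2 (hd (by omega)))]
  refine ⟨(finPairEquiv p).trans v, ?_⟩
  calc _ = ∑ i ∈ range p, (d (2 * i + 1) - d (2 * i)) := by
        simp_rw [Equiv.trans_apply, hterm]
        exact Fin.sum_univ_eq_sum_range (fun i => d (2 * i + 1) - d (2 * i)) p
    _ ≤ d (2 * p) - d 0 := sum_range_sub_le_of_monotone hd p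
    _ ≤ c := hw _ _

section Transversal

variable {ι V : Type*} [Fintype V] (e : ι × Bool ≃ V)

/-- A perfect matching of `V` is encoded as an equivalence `e : ι × Bool ≃ V`, the `i`-th pair
being `{e (i, false), e (i, true)}`; `pairTransversal e f` picks `e (i, f i)` from each pair. -/
def pairTransversal (f : ι → Bool) : Finset V := {v | f (e.symm v).1 = (e.symm v).2}

variable {e}

@[simp] lemma apply_mem_pairTransversal {f : ι → Bool} {i : ι} {b : Bool} :
    e (i, b) ∈ pairTransversal e f ↔ f i = b := by
  simp [pairTransversal]

variable (e)

lemma compl_pairTransversal (f : ι → Bool) :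
    (pairTransversal e f)ᶜ = pairTransversal e (fun i => !f i) := by
  ext v
  obtain ⟨⟨i, b⟩, rfl⟩ := e.surjective v
  cases b <;> simp

lemma pairTransversal_eq_image [Fintype ι] (f : ι → Bool) :
    pairTransversal e f = univ.image fun i => e (i, f i) := by
  ext v
  obtain ⟨⟨i, b⟩, rfl⟩ := e.surjective v
  simp [eq_comm]

lemma sum_pairTransversal [Fintype ι] {M : Type*} [AddCommMonoid M] (f : ι → Bool) (w : V → M) :
    ∑ v ∈ pairTransversal e f, w v = ∑ i, w (e (i, f i)) := by
  rw [pairTransversal_eq_image, sum_image fun _ _ _ _ h => (Prod.mk.inj (e.injective h)).1]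

lemma card_pairTransversal [Fintype ι] (f : ι → Bool) :
    #(pairTransversal e f) = Fintype.card ι := by
  rw [card_eq_sum_ones, sum_pairTransversal, sum_const, card_univ, smul_eq_mul, mul_one]

lemma abs_sum_pairTransversal_sub_sum_compl_le [Fintype ι] (f : ι → Bool) (w : V → ℤ) :
    |∑ v ∈ pairTransversal e f, w v - ∑ v ∈ (pairTransversal e f)ᶜ, w v|
      ≤ ∑ i, |w (e (i, true)) - w (e (i, false))| := by
  rw [compl_pairTransversal, sum_pairTransversal, sum_pairTransversal, ← sum_sub_distrib]
  refine (abs_sum_le_sum_abs _ _).trans (sum_le_sum fun i _ => ?_)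
  cases f i <;> simp [abs_sub_comm]

lemma two_mul_card_monochromatic_le [Fintype ι] {x y : V} (hxy : x ≠ y) :
    2 * #{f : ι → Bool | x ∈ pairTransversal e f ↔ y ∈ pairTransversal e f}
      ≤ Fintype.card (ι → Bool) := by
  obtain ⟨⟨i, b⟩, rfl⟩ := e.surjective x
  obtain ⟨⟨j, c⟩, rfl⟩ := e.surjective y
  simp only [apply_mem_pairTransversal]
  -- flipping the choice in the pair of `y` moves `y` to the other side and keeps `x` in place
  refine two_mul_card_filter_le_of_involutive (σ := fun f => Function.update f j (!f j))
    (fun f => by simp) fun f hf => ?_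
  by_cases hij : i = j
  · subst hij
    have hbc : b ≠ c := fun h => hxy (by rw [h])
    cases b <;> cases c <;> cases f i <;> simp_all
  · simp only [Function.update_of_ne hij, Function.update_self]
    revert hf
    cases f i <;> cases f j <;> cases b <;> cases c <;> decide

end Transversal

section Graph

variable {V : Type*} [Fintype V] (G : SimpleGraph V)

lemma sum_card_neighborFinset_inter (s t : Finset V) :
    ∑ v ∈ s, #(G.neighborFinset v ∩ t) = #(G.interedges s t) := by
  rw [SimpleGraph.interedges_def, card_filter, sum_product]
  refine sum_congr rfl fun v _ => ?_
  rw [← card_filter]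
  congr 1
  ext w
  simp [and_comm]

lemma two_mul_edgesIn (s : Finset V) : 2 * edgesIn G s = #(G.interedges s s) := by
  let H := G.deleteEdges {e | ¬ ∀ v ∈ e, v ∈ s}
  have hE : H.edgeFinset = G.edgeFinset.filter fun e => ∀ v ∈ e, v ∈ s := by
    ext e; simp [H]
  have hA : ∀ x y, H.Adj x y ↔ G.Adj x y ∧ x ∈ s ∧ y ∈ s := by
    intro x y; simp [H]
  rw [edgesIn, ← hE, H.two_mul_card_edgeFinset, SimpleGraph.interedges_def]
  congr 1
  ext ⟨x, y⟩
  simp only [hA, mem_filter, mem_univ, true_and, mem_product]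
  tauto

lemma sum_degree_eq (s : Finset V) :
    ∑ v ∈ s, G.degree v = 2 * edgesIn G s + #(G.interedges s sᶜ) := by
  rw [two_mul_edgesIn, ← sum_card_neighborFinset_inter, ← sum_card_neighborFinset_inter,
    ← sum_add_distrib]
  refine sum_congr rfl fun v _ => ?_
  rw [← sdiff_eq_inter_compl, card_inter_add_card_sdiff, SimpleGraph.card_neighborFinset_eq_degree]

lemma sum_degree_sub_sum_degree_compl (s : Finset V) :
    ∑ v ∈ s, (G.degree v : ℤ) - ∑ v ∈ sᶜ, (G.degree v : ℤ)
      = 2 * edgesIn G s - 2 * edgesIn G sᶜ := by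
  have hcut : #(G.interedges sᶜ s) = #(G.interedges s sᶜ) :=
    have := G.symm; Rel.card_interedges_comm _ _
  have hsc := sum_degree_eq G sᶜ
  rw [compl_compl, hcut] at hsc
  rw [← Nat.cast_sum, ← Nat.cast_sum, sum_degree_eq, hsc]
  push_cast
  ring

lemma edgesIn_add_edgesIn_compl (s : Finset V) :
    edgesIn G s + edgesIn G sᶜ = #{e ∈ G.edgeFinset | ∀ x ∈ e, ∀ y ∈ e, x ∈ s ↔ y ∈ s} := by
  rw [edgesIn, edgesIn, ← card_union_of_disjoint, ← filter_or]
  · congr 1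
    refine filter_congr fun e _ => ?_
    induction e with
    | _ x y =>
      simp only [Sym2.mem_iff, forall_eq_or_imp, forall_eq, mem_compl]
      tauto
  · refine disjoint_filter.2 fun e _ hs hsc => ?_
    induction e with
    | _ x y => exact mem_compl.1 (hsc x (Sym2.mem_mk_left x y)) (hs x (Sym2.mem_mk_left x y))

lemma exists_pairTransversal_two_mul_edgesIn_add_le {ι : Type*} [Fintype ι]
    (e : ι × Bool ≃ V) :
    ∃ f : ι → Bool,
      2 * (edgesIn G (pairTransversal e f) + edgesIn G (pairTransversal e f)ᶜ) ≤ #G.edgeFinset := by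
  let Mono (f : ι → Bool) (d : Sym2 V) : Prop :=
    ∀ x ∈ d, ∀ y ∈ d, x ∈ pairTransversal e f ↔ y ∈ pairTransversal e f
  have hmono : ∀ d ∈ G.edgeFinset, 2 * #{f | Mono f d} ≤ Fintype.card (ι → Bool) := by
    intro d hd
    induction d with
    | _ x y =>
      convert two_mul_card_monochromatic_le e (G.ne_of_adj (SimpleGraph.mem_edgeFinset.1 hd))
        using 4
      simp only [Mono, Sym2.mem_iff, forall_eq_or_imp, forall_eq]
      tauto
  have hswap : ∑ f : ι → Bool, #{d ∈ G.edgeFinset | Mono f d}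
      = ∑ d ∈ G.edgeFinset, #{f | Mono f d} :=
    sum_card_bipartiteAbove_eq_sum_card_bipartiteBelow Mono
  have hsum : ∑ f : ι → Bool,
      2 * (edgesIn G (pairTransversal e f) + edgesIn G (pairTransversal e f)ᶜ)
        ≤ ∑ _f : ι → Bool, #G.edgeFinset :=
    calc _ = ∑ d ∈ G.edgeFinset, 2 * #{f | Mono f d} := by
          simp_rw [edgesIn_add_edgesIn_compl, ← mul_sum]
          exact congrArg _ hswap
      _ ≤ ∑ _d ∈ G.edgeFinset, Fintype.card (ι → Bool) := sum_le_sum hmono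
      _ = ∑ _f : ι → Bool, #G.edgeFinset := by simp [mul_comm]
  obtain ⟨f, -, hf⟩ := exists_le_of_sum_le univ_nonempty hsum
  exact ⟨f, hf⟩

lemma exists_balanced_four_mul_max_edgesIn_add_minDegree_le [Nonempty V] {p : ℕ}
    (hV : Fintype.card V = 2 * p) :
    ∃ A : Finset V, 2 * #A = Fintype.card V ∧
      4 * max (edgesIn G A) (edgesIn G Aᶜ) + G.minDegree ≤ #G.edgeFinset + G.maxDegree := by
  obtain ⟨e, he⟩ := exists_pairing_sum_abs_sub_le hV (fun v => (G.degree v : ℤ))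
    (c := G.maxDegree - G.minDegree) fun u v => by
      have := G.degree_le_maxDegree u
      have := G.minDegree_le_degree v
      omega
  obtain ⟨f, hf⟩ := exists_pairTransversal_two_mul_edgesIn_add_le G e
  refine ⟨pairTransversal e f, by rw [card_pairTransversal, Fintype.card_fin, hV], ?_⟩
  have hdiff := abs_sum_pairTransversal_sub_sum_compl_le e f (fun v => (G.degree v : ℤ))
  rw [sum_degree_sub_sum_degree_compl] at hdiff
  have := abs_le.1 (hdiff.trans he)
  omega

end Graph

theorem stmt_15_general {V : Type*} [Fintype V] (G : SimpleGraph V)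
    (m0 ε : ℝ) (hε : 0 < ε)
    (heven : Even (Fintype.card V)) (hn : (Fintype.card V : ℝ) > 1 / ε)
    (hm : (G.edgeFinset.card : ℝ) ≤ (4 * m0 - ε) * (Fintype.card V : ℝ) ^ 2) :
    ∃ A : Finset V, 2 * A.card = Fintype.card V ∧
      (max (edgesIn G A) (edgesIn G Aᶜ) : ℝ) < m0 * (Fintype.card V : ℝ) ^ 2 := by
  have hεn : 1 < ε * Fintype.card V := by rwa [gt_iff_lt, div_lt_iff₀ hε, mul_comm] at hn
  have hn0 : (0 : ℝ) < Fintype.card V := lt_trans (by positivity) hn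
  have : Nonempty V := Fintype.card_pos_iff.1 (by exact_mod_cast hn0)
  obtain ⟨p, hp⟩ := heven
  obtain ⟨A, hA, hmax⟩ :=
    exists_balanced_four_mul_max_edgesIn_add_minDegree_le G (p := p) (by omega)
  refine ⟨A, hA, ?_⟩
  have hmax' : (4 * max (edgesIn G A) (edgesIn G Aᶜ) + G.minDegree : ℝ)
      ≤ #G.edgeFinset + G.maxDegree := by exact_mod_cast hmax
  have hΔ : (G.maxDegree : ℝ) < Fintype.card V := by exact_mod_cast G.maxDegree_lt_card_verts
  have hnε : (Fintype.card V : ℝ) < ε * Fintype.card V ^ 2 := by nlinarith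
  have : (0 : ℝ) ≤ G.minDegree := by positivity
  rw [← Nat.cast_max]
  linarith

theorem stmt_15 {V : Type*} [Fintype V] (G : SimpleGraph V)
    (m0 ε : ℝ) (hm0 : 0 < m0) (hε : 0 < ε)
    (heven : Even (Fintype.card V)) (hn : (Fintype.card V : ℝ) > 1 / ε)
    (hm : (G.edgeFinset.card : ℝ) ≤ (4 * m0 - ε) * (Fintype.card V : ℝ) ^ 2) :
    ∃ A : Finset V, 2 * A.card = Fintype.card V ∧
      (max (edgesIn G A) (edgesIn G Aᶜ) : ℝ) < m0 * (Fintype.card V : ℝ) ^ 2 :=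
  stmt_15_general G m0 ε hε heven hn hm
end
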